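/- arXiv:1707.09398 — 3 statements merged into one kernel-verified Lean document; each statement's English description precedes it below -/
import Mathlib

section
/- For all real Q, the extremal mass function m_ext(Q) = (1/(3√6)) (√(1+12Q²)+2) (√(1+12Q²)−1)^{1/2} satisfies m_ext(Q) ≥ |Q|, with equality if and only if Q = 0. -/
/-! With `s = √(1 + 12 Q²) ≥ 1` one has `Q² = (s² - 1) / 12` and `mextQ Q ² = (s + 2)² (s - 1) / 54`,
so that `mextQ Q ² - Q² = (s - 1)² (2 s + 1) / 108`. This is nonnegative and vanishes exactly when
`s = 1`, i.e. when `Q = 0`. -/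

/-- Extremal Reissner–Nordström–AdS mass as a function of charge `Q`
(cosmological constant `Λ = -3`). -/
noncomputable def mextQ (Q : ℝ) : ℝ :=
  (1 / (3 * Real.sqrt 6)) * (Real.sqrt (1 + 12 * Q ^ 2) + 2) *
    Real.sqrt (Real.sqrt (1 + 12 * Q ^ 2) - 1)

namespace mextQ

open Real

lemma one_le_sqrt_one_add_twelve_mul_sq (Q : ℝ) : 1 ≤ √(1 + 12 * Q ^ 2) :=
  one_le_sqrt.mpr (by nlinarith [sq_nonneg Q])

lemma sq_sqrt_one_add_twelve_mul_sq (Q : ℝ) : √(1 + 12 * Q ^ 2) ^ 2 = 1 + 12 * Q ^ 2 :=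
  sq_sqrt (by positivity)

lemma sqrt_one_add_twelve_mul_sq_eq_one_iff (Q : ℝ) : √(1 + 12 * Q ^ 2) = 1 ↔ Q = 0 := by
  rw [sqrt_eq_one]
  constructor
  · intro h
    exact pow_eq_zero_iff two_ne_zero |>.mp (by linarith)
  · rintro rfl
    norm_num

lemma nonneg (Q : ℝ) : 0 ≤ mextQ Q := by
  have := sqrt_nonneg (1 + 12 * Q ^ 2)
  unfold mextQ
  positivity

lemma sq_eq (Q : ℝ) :
    mextQ Q ^ 2 = (√(1 + 12 * Q ^ 2) + 2) ^ 2 * (√(1 + 12 * Q ^ 2) - 1) / 54 := by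
  have h6 : √6 ^ 2 = 6 := sq_sqrt (by norm_num)
  have hs : √(√(1 + 12 * Q ^ 2) - 1) ^ 2 = √(1 + 12 * Q ^ 2) - 1 :=
    sq_sqrt (by linarith [one_le_sqrt_one_add_twelve_mul_sq Q])
  rw [mextQ, mul_pow, mul_pow, hs, div_pow, mul_pow, h6]
  ring

lemma sq_sub_sq_eq (Q : ℝ) :
    mextQ Q ^ 2 - Q ^ 2 = (√(1 + 12 * Q ^ 2) - 1) ^ 2 * (2 * √(1 + 12 * Q ^ 2) + 1) / 108 := by
  rw [sq_eq]
  linear_combination (1 / 12) * sq_sqrt_one_add_twelve_mul_sq Q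

end mextQ

open mextQ in
theorem stmt0 (Q : ℝ) : |Q| ≤ mextQ Q ∧ (mextQ Q = |Q| ↔ Q = 0) := by
  have hdiff := sq_sub_sq_eq Q
  have hgap : 0 ≤ mextQ Q ^ 2 - Q ^ 2 := hdiff ▸ by positivity
  refine ⟨?_, ?_⟩
  · rw [← sq_le_sq₀ (abs_nonneg Q) (nonneg Q), sq_abs]
    linarith
  · have hpos : 2 * √(1 + 12 * Q ^ 2) + 1 ≠ 0 := by positivity
    rw [← sq_eq_sq₀ (nonneg Q) (abs_nonneg Q), sq_abs, ← sub_eq_zero, hdiff, div_eq_zero_iff,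
      or_iff_left (by norm_num), mul_eq_zero, or_iff_left hpos, pow_eq_zero_iff two_ne_zero,
      sub_eq_zero]
    exact sqrt_one_add_twelve_mul_sq_eq_one_iff Q
end

section
/- Let g = g₀ + a be an asymptotically AdS hyperbolic metric on S² × [r₀,∞) with g₀ = dr²/(1+r²) + r²σ and a_{rr} = 𝐦^r/r⁵ + O(r⁻⁶), a_{rα} = O(r⁻³), a_{αβ} = 𝐦^g_{αβ}/r + O(r⁻²). If u = √(1+r²) + u₀ + O(r⁻¹⁺ᵉ) and f = O(r⁻³) with appropriate derivative decay, then g₁ = g + u² df² satisfies the same asymptotic expansion with identical leading coefficients 𝐦^r and 𝐦^g; in particular the mass aspect function and the total mass m = (1/16π)∫_{S²}(3 Tr_σ 𝐦^g + 2𝐦^r) are unchanged. -/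
open Filter Asymptotics

/-!
Since `u = √(1 + r²) + O(1)` grows linearly, `u² df_i df_j` is `O(r^{2+k+l})` whenever
`df_i = O(r^k)` and `df_j = O(r^l)`. With `k, l ∈ {-4, -3}` this gives `O(r⁻⁶)`, `O(r⁻⁵)` and
`O(r⁻⁴)` for the radial, mixed and spherical components, each of lower order than the error
term already present in `a`, so the leading coefficients `𝐦^r` and `𝐦^g` survive the deformation.
-/

lemma isBigO_rpow_rpow_atTop_of_le {s t : ℝ} (hst : s ≤ t) :
    (fun r : ℝ => r ^ s) =O[atTop] fun r => r ^ t := by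
  refine IsBigO.of_bound 1 ?_
  filter_upwards [eventually_ge_atTop 1] with r hr
  have hr₀ : (0 : ℝ) ≤ r := by linarith
  rw [one_mul, Real.norm_of_nonneg (Real.rpow_nonneg hr₀ _),
    Real.norm_of_nonneg (Real.rpow_nonneg hr₀ _)]
  exact Real.rpow_le_rpow_of_exponent_le hr hst

lemma isBigO_zpow_zpow_atTop_of_le {k l : ℤ} (hkl : k ≤ l) :
    (fun r : ℝ => r ^ k) =O[atTop] fun r => r ^ l := by
  simpa only [Real.rpow_intCast] using isBigO_rpow_rpow_atTop_of_le (Int.cast_le.2 hkl)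

lemma sqrt_one_add_sq_isBigO_atTop : (fun r : ℝ => √(1 + r ^ 2)) =O[atTop] fun r => r := by
  refine IsBigO.of_bound 2 ?_
  filter_upwards [eventually_ge_atTop 1] with r hr
  rw [Real.norm_of_nonneg (Real.sqrt_nonneg _), Real.norm_of_nonneg (by linarith)]
  have := sqrt_one_add_norm_sq_le r
  rw [Real.norm_of_nonneg (by linarith)] at this
  linarith

lemma isBigO_id_of_sub_sqrt_one_add_sq {u : ℝ → ℝ} {c s : ℝ} (hs : s ≤ 1)
    (hu : (fun r => u r - √(1 + r ^ 2) - c) =O[atTop] fun r => r ^ s) :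
    u =O[atTop] fun r => r := by
  have herr : (fun r => u r - √(1 + r ^ 2) - c) =O[atTop] fun r : ℝ => r :=
    (hu.trans (isBigO_rpow_rpow_atTop_of_le hs)).congr_right fun r => Real.rpow_one r
  have hconst : (fun _ => c) =O[atTop] fun r : ℝ => r := (isLittleO_const_id_atTop c).isBigO
  exact ((herr.add sqrt_one_add_sq_isBigO_atTop).add hconst).congr_left fun r => by ring

lemma isBigO_sq_mul_mul_zpow_atTop {u v w : ℝ → ℝ} {k l : ℤ}
    (hu : u =O[atTop] fun r => r) (hv : v =O[atTop] fun r => r ^ k)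
    (hw : w =O[atTop] fun r => r ^ l) :
    (fun r => u r ^ 2 * v r * w r) =O[atTop] fun r => r ^ (2 + k + l) := by
  refine ((hu.pow 2).mul hv |>.mul hw).trans (EventuallyEq.isBigO ?_)
  filter_upwards [eventually_ne_atTop 0] with r hr
  rw [zpow_add₀ hr, zpow_add₀ hr]
  norm_cast

theorem stmt13_general (a : ℝ → ℝ × ℝ → Fin 3 → Fin 3 → ℝ)
    (mr : ℝ × ℝ → ℝ) (mg : ℝ × ℝ → Fin 3 → Fin 3 → ℝ)
    (u : ℝ → ℝ × ℝ → ℝ) (df : ℝ → ℝ × ℝ → Fin 3 → ℝ)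
    (u₀ ε : ℝ) (hε1 : ε < 1)
    (h_arr : ∀ y, (fun r => a r y 0 0 - mr y / r ^ 5) =O[atTop] fun r : ℝ => r ^ (-6 : ℤ))
    (h_ara : ∀ y, ∀ α : Fin 3, α ≠ 0 →
      (fun r => a r y 0 α) =O[atTop] fun r : ℝ => r ^ (-3 : ℤ))
    (h_aab : ∀ y, ∀ α β : Fin 3, α ≠ 0 → β ≠ 0 →
      (fun r => a r y α β - mg y α β / r) =O[atTop] fun r : ℝ => r ^ (-2 : ℤ))
    (hu : ∀ y, (fun r => u r y - Real.sqrt (1 + r ^ 2) - u₀) =O[atTop]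
      fun r : ℝ => r ^ (ε - 1))
    (hdf0 : ∀ y, (fun r => df r y 0) =O[atTop] fun r : ℝ => r ^ (-4 : ℤ))
    (hdfa : ∀ y, ∀ α : Fin 3, α ≠ 0 →
      (fun r => df r y α) =O[atTop] fun r : ℝ => r ^ (-3 : ℤ)) :
    (∀ y, (fun r => (a r y 0 0 + u r y ^ 2 * df r y 0 * df r y 0) - mr y / r ^ 5)
        =O[atTop] fun r : ℝ => r ^ (-6 : ℤ)) ∧
      (∀ y, ∀ α : Fin 3, α ≠ 0 →
        (fun r => a r y 0 α + u r y ^ 2 * df r y 0 * df r y α)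
          =O[atTop] fun r : ℝ => r ^ (-3 : ℤ)) ∧
      (∀ y, ∀ α β : Fin 3, α ≠ 0 → β ≠ 0 →
        (fun r => (a r y α β + u r y ^ 2 * df r y α * df r y β) - mg y α β / r)
          =O[atTop] fun r : ℝ => r ^ (-2 : ℤ)) := by
  have hu_lin y : (fun r => u r y) =O[atTop] fun r => r :=
    isBigO_id_of_sub_sqrt_one_add_sq (by linarith) (hu y)
  refine ⟨fun y => ?_, fun y α hα => ?_, fun y α β hα hβ => ?_⟩
  · have hdef := isBigO_sq_mul_mul_zpow_atTop (hu_lin y) (hdf0 y) (hdf0 y)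
    exact ((h_arr y).add hdef).congr_left fun r => by ring
  · have hdef := (isBigO_sq_mul_mul_zpow_atTop (hu_lin y) (hdf0 y) (hdfa y α hα)).trans
      (isBigO_zpow_zpow_atTop_of_le (l := -3) (by norm_num))
    exact ((h_ara y α hα).add hdef).congr_left fun r => by ring
  · have hdef := (isBigO_sq_mul_mul_zpow_atTop (hu_lin y) (hdfa y α hα) (hdfa y β hβ)).trans
      (isBigO_zpow_zpow_atTop_of_le (l := -2) (by norm_num))
    exact ((h_aab y α β hα hβ).add hdef).congr_left fun r => by ring

/-- Lemma 3.1: the generalized Jang deformation `g₁ = g + u² df²` with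
`u = √(1+r²) + u₀ + O(r^{−1+ε})` and `f = O(r⁻³)` (with derivative decay
`f_r = O(r⁻⁴)`, `f_α = O(r⁻³)`) preserves the asymptotically AdS hyperbolic
expansion with identical leading coefficients `𝐦^r`, `𝐦^g`; in particular the
mass aspect function and the total mass are unchanged.  Here `a = g − g₀` and
the components are functions of `r` and a point `y = (θ,φ)` of `S²`;
index `0` is the radial direction. -/
theorem stmt13 (a : ℝ → ℝ × ℝ → Fin 3 → Fin 3 → ℝ)
    (mr : ℝ × ℝ → ℝ) (mg : ℝ × ℝ → Fin 3 → Fin 3 → ℝ)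
    (u f : ℝ → ℝ × ℝ → ℝ) (df : ℝ → ℝ × ℝ → Fin 3 → ℝ)
    (u₀ ε : ℝ) (hε : 0 < ε) (hε1 : ε < 1)
    (h_arr : ∀ y, (fun r => a r y 0 0 - mr y / r ^ 5) =O[atTop] fun r : ℝ => r ^ (-6 : ℤ))
    (h_ara : ∀ y, ∀ α : Fin 3, α ≠ 0 →
      (fun r => a r y 0 α) =O[atTop] fun r : ℝ => r ^ (-3 : ℤ))
    (h_aab : ∀ y, ∀ α β : Fin 3, α ≠ 0 → β ≠ 0 →
      (fun r => a r y α β - mg y α β / r) =O[atTop] fun r : ℝ => r ^ (-2 : ℤ))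
    (hu : ∀ y, (fun r => u r y - Real.sqrt (1 + r ^ 2) - u₀) =O[atTop]
      fun r : ℝ => r ^ (ε - 1))
    (hf : ∀ y, (fun r => f r y) =O[atTop] fun r : ℝ => r ^ (-3 : ℤ))
    (hdf0 : ∀ y, (fun r => df r y 0) =O[atTop] fun r : ℝ => r ^ (-4 : ℤ))
    (hdfa : ∀ y, ∀ α : Fin 3, α ≠ 0 →
      (fun r => df r y α) =O[atTop] fun r : ℝ => r ^ (-3 : ℤ)) :
    (∀ y, (fun r => (a r y 0 0 + u r y ^ 2 * df r y 0 * df r y 0) - mr y / r ^ 5)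
        =O[atTop] fun r : ℝ => r ^ (-6 : ℤ)) ∧
      (∀ y, ∀ α : Fin 3, α ≠ 0 →
        (fun r => a r y 0 α + u r y ^ 2 * df r y 0 * df r y α)
          =O[atTop] fun r : ℝ => r ^ (-3 : ℤ)) ∧
      (∀ y, ∀ α β : Fin 3, α ≠ 0 → β ≠ 0 →
        (fun r => (a r y α β + u r y ^ 2 * df r y α * df r y β) - mg y α β / r)
          =O[atTop] fun r : ℝ => r ^ (-2 : ℤ)) :=
  stmt13_general a mr mg u df u₀ ε hε1 h_arr h_ara h_aab hu hdf0 hdfa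
end

section
/- Let ũ(r) = √(1 − 2m/r + Q²/r²) (the lapse of the Reissner–Nordström slice) and let f̃ solve f̃'(r) = r / [(1 − 2m/r + Q²/r²) √(1 − 2m/r + Q²/r² + r²)] on the region where 1 − 2m/r + Q²/r² > 0. Then u := ũ/√(1 − ũ² |∇f̃|²_{g₃}), where |∇f̃|²_{g₃} = (1 − 2m/r + Q²/r²)(f̃')², equals √(1 − 2m/r + Q²/r² + r²). -/
lemma stmt17_aux (D r : ℝ) (hD : 0 < D) (hS : 0 < D + r ^ 2) :
    Real.sqrt D / Real.sqrt (1 - Real.sqrt D ^ 2 *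
      (D * (r / (D * Real.sqrt (D + r ^ 2))) ^ 2)) = Real.sqrt (D + r ^ 2) := by
  have hsqD : Real.sqrt D ^ 2 = D := Real.sq_sqrt hD.le
  set s := Real.sqrt (D + r ^ 2) with hs
  have hs2 : s ^ 2 = D + r ^ 2 := Real.sq_sqrt hS.le
  have hsne : s ≠ 0 := (Real.sqrt_pos.mpr hS).ne'
  have hDne : D ≠ 0 := hD.ne'
  have key : 1 - Real.sqrt D ^ 2 * (D * (r / (D * s)) ^ 2) = D / (D + r ^ 2) := by
    rw [hsqD]
    field_simp
    linear_combination (D ^ 2 * (D + r ^ 2) - D ^ 3 + r ^ 2 - r ^ 2 * D ^ 2) * hs2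
  rw [key, Real.sqrt_div hD.le]
  have hsd : Real.sqrt D ≠ 0 := (Real.sqrt_pos.mpr hD).ne'
  field_simp
  exact hs.symm

/-- Equations (5.12)–(5.13): with `D = 1 − 2m/r + Q²/r² > 0` the Reissner–Nordström
lapse `ũ = √D` and the umbilic-slice graph function with `f̃' = r/(D√(D+r²))`,
so that `|∇f̃|²_{g₃} = D (f̃')²`, satisfy
`ũ/√(1 − ũ²|∇f̃|²_{g₃}) = √(D + r²)`, the Reissner–Nordström–AdS warping factor. -/
theorem stmt17 (m Q r : ℝ) (hr : 0 < r)
    (hD : 0 < 1 - 2 * m / r + Q ^ 2 / r ^ 2) :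
    Real.sqrt (1 - 2 * m / r + Q ^ 2 / r ^ 2) /
        Real.sqrt (1 -
          Real.sqrt (1 - 2 * m / r + Q ^ 2 / r ^ 2) ^ 2 *
            ((1 - 2 * m / r + Q ^ 2 / r ^ 2) *
              (r / ((1 - 2 * m / r + Q ^ 2 / r ^ 2) *
                Real.sqrt (1 - 2 * m / r + Q ^ 2 / r ^ 2 + r ^ 2))) ^ 2)) =
      Real.sqrt (1 - 2 * m / r + Q ^ 2 / r ^ 2 + r ^ 2) := by
  exact stmt17_aux _ r hD (by positivity)
end
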